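/- arXiv:0908.1021 — 2 statements merged into one kernel-verified Lean document; each statement's English description precedes it below -/
import Mathlib

section
/- Let L₀, …, L_{d+1} be elements of a (possibly noncommutative) associative algebra and set L = ∑_{i=0}^{d+1} L_i. Then, truncating formal power series in t at order 2: the degree-≤2 part of (1/2)∏_{i=0}^{d+1}(I + tL_i + (t²/2)L_i²) + (1/2)∏_{i=0}^{d+1}(I + tL_{d+1−i} + (t²/2)L_{d+1−i}²) equals I + tL + (t²/2)L². (Here the first product is in increasing order of index and the second in decreasing order.) -/
/-!
All factors have constant term `1`, so the `t`-coefficient of a product of them, in either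
order, is the sum of the `t`-coefficients. In the `t²`-coefficient the product in increasing
order contains the cross terms `Lᵢ Lⱼ` with `i < j`, the reversed product those with `i > j`;
together with `2 • (½ Lᵢ²) = Lᵢ²` they add up to `(∑ Lᵢ)²`, so the average of the two orderings
has `t²`-coefficient `½ L²`.
-/

open Polynomial

/-- Order-2 truncation of `exp(tL)` as a polynomial in the central variable `t`
with coefficients in a noncommutative algebra. -/
noncomputable def expTrunc2 {A : Type*} [Ring A] [Algebra ℚ A] (L : A) : Polynomial A :=
  1 + Polynomial.C L * Polynomial.X + Polynomial.C ((1 / 2 : ℚ) • L ^ 2) * Polynomial.X ^ 2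

section ListProd

variable {R : Type*} [Semiring R]

theorem Polynomial.coeff_mul_two (p q : R[X]) :
    (p * q).coeff 2 = p.coeff 0 * q.coeff 2 + p.coeff 1 * q.coeff 1 + p.coeff 2 * q.coeff 0 := by
  rw [coeff_mul, Finset.Nat.sum_antidiagonal_eq_sum_range_succ_mk]
  simp [Finset.sum_range_succ, add_assoc]

theorem Polynomial.coeff_zero_list_prod {l : List R[X]} (h0 : ∀ p ∈ l, p.coeff 0 = 1) :
    l.prod.coeff 0 = 1 := by
  rw [← constantCoeff_apply, map_list_prod]
  exact List.prod_eq_one (by simpa using h0)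

theorem Polynomial.coeff_one_list_prod {l : List R[X]} (h0 : ∀ p ∈ l, p.coeff 0 = 1) :
    l.prod.coeff 1 = (l.map (coeff · 1)).sum := by
  induction l with
  | nil => simp [coeff_one]
  | cons p l ih =>
    rw [List.forall_mem_cons] at h0
    simp [mul_coeff_one, h0.1, coeff_zero_list_prod h0.2, ih h0.2, add_comm]

theorem Polynomial.coeff_one_reverse_list_prod {l : List R[X]} (h0 : ∀ p ∈ l, p.coeff 0 = 1) :
    l.reverse.prod.coeff 1 = (l.map (coeff · 1)).sum := by
  rw [coeff_one_list_prod (by simpa using h0), List.map_reverse, List.sum_reverse]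

theorem Polynomial.coeff_two_list_prod_add_reverse {l : List R[X]}
    (h0 : ∀ p ∈ l, p.coeff 0 = 1) (h2 : ∀ p ∈ l, 2 * p.coeff 2 = p.coeff 1 ^ 2) :
    l.prod.coeff 2 + l.reverse.prod.coeff 2 = (l.map (coeff · 1)).sum ^ 2 := by
  induction l with
  | nil => simp [coeff_one]
  | cons p l ih =>
    rw [List.forall_mem_cons] at h0 h2
    have hrev : ∀ q ∈ l.reverse, q.coeff 0 = 1 := by simpa using h0.2
    set s := (l.map (coeff · 1)).sum
    calc (p :: l).prod.coeff 2 + (p :: l).reverse.prod.coeff 2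
        = (l.prod.coeff 2 + l.reverse.prod.coeff 2) + p.coeff 1 * s + s * p.coeff 1
            + 2 * p.coeff 2 := by
          rw [List.reverse_cons, List.prod_append, List.prod_singleton, List.prod_cons]
          simp only [coeff_mul_two, coeff_zero_list_prod h0.2, coeff_zero_list_prod hrev, h0.1,
            coeff_one_list_prod h0.2, coeff_one_reverse_list_prod h0.2, one_mul, mul_one, two_mul]
          abel
      _ = (p.coeff 1 + s) ^ 2 := by
          rw [ih h0.2 h2.2, h2.1]
          simp only [sq, mul_add, add_mul]
          abel
      _ = ((p :: l).map (coeff · 1)).sum ^ 2 := by simp [s]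

end ListProd

section ExpTrunc2

variable {A : Type*} [Ring A] [Algebra ℚ A]

@[simp]
theorem expTrunc2_coeff_zero (L : A) : (expTrunc2 L).coeff 0 = 1 := by
  simp [expTrunc2, coeff_one]

@[simp]
theorem expTrunc2_coeff_one (L : A) : (expTrunc2 L).coeff 1 = L := by
  simp [expTrunc2, coeff_one]

theorem expTrunc2_coeff_two (L : A) : (expTrunc2 L).coeff 2 = (1 / 2 : ℚ) • L ^ 2 := by
  simp [expTrunc2, coeff_one]

theorem two_mul_expTrunc2_coeff_two (L : A) : 2 * (expTrunc2 L).coeff 2 = L ^ 2 := by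
  rw [expTrunc2_coeff_two, two_mul, ← add_smul]
  norm_num

end ExpTrunc2

theorem half_smul_add_half_smul {K M : Type*} [DivisionSemiring K] [NeZero (2 : K)]
    [AddCommMonoid M] [Module K M] (x : M) : (1 / 2 : K) • x + (1 / 2 : K) • x = x := by
  rw [← add_smul, add_halves, one_smul]

/-- The symmetrized Ninomiya–Victoir (b) composition matches the semigroup
expansion `I + tL + (t²/2)L²` up to order 2 in `t`. -/
theorem ninomiya_victoir_b_second_order {A : Type*} [Ring A] [Algebra ℚ A]
    (d : ℕ) (L : Fin (d + 2) → A) :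
    ∀ j ≤ 2,
      ((1 / 2 : ℚ) • (((List.finRange (d + 2)).map fun i => expTrunc2 (L i)).prod)
        + (1 / 2 : ℚ) • (((List.finRange (d + 2)).reverse.map fun i => expTrunc2 (L i)).prod)).coeff j
      = (expTrunc2 (∑ i, L i)).coeff j := by
  set l := (List.finRange (d + 2)).map fun i => expTrunc2 (L i)
  have h0 : ∀ p ∈ l, p.coeff 0 = 1 := by simp [l]
  have h2 : ∀ p ∈ l, 2 * p.coeff 2 = p.coeff 1 ^ 2 := by
    simp [l, two_mul_expTrunc2_coeff_two]
  have hsum : (l.map (coeff · 1)).sum = ∑ i, L i := by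
    simp [l, Fin.sum_univ_def, Function.comp_def]
  have hrev : ∀ p ∈ l.reverse, p.coeff 0 = 1 := by simpa using h0
  rw [List.map_reverse]
  intro j hj
  rw [coeff_add, coeff_smul, coeff_smul]
  interval_cases j
  · rw [coeff_zero_list_prod h0, coeff_zero_list_prod hrev, expTrunc2_coeff_zero,
      half_smul_add_half_smul]
  · rw [coeff_one_list_prod h0, coeff_one_reverse_list_prod h0, hsum, expTrunc2_coeff_one,
      half_smul_add_half_smul]
  · rw [← smul_add, coeff_two_list_prod_add_reverse h0 h2, hsum, expTrunc2_coeff_two]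
end

section
/- Let ν be a Lévy measure on ℝ^d \ {0}, Σ_ε = ∫_{|y| ≤ ε} y y* dν the small-jump covariance matrix, h Lipschitz with linear growth, and f ∈ C³ with |D³f(z)| ≤ M(1 + |z|^p). Then |∫_{|y| ≤ ε}(f(x + h(x)y) − f(x) − ∇f(x)h(x)y) dν(y) − (1/2)∑_{k,l} ∂_{kl} f(x) (h(x) Σ_ε h(x)*)_{kl}| ≤ C M (1 + |x|^{p+3}) ∫_{|y| ≤ ε} |y|³ dν(y). -/
open MeasureTheory
open Matrix

/-!
Taylor's formula with integral remainder bounds the small-jump integrand pointwise by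
`½ sup ‖D³f‖ · ‖h(x) y‖³`, the supremum taken over the ball of radius `‖h(x)‖ ≤ d C_h (1 + ‖x‖)`
around `x`; the polynomial growth of `D³f` turns this into `C M (1 + ‖x‖^{p+3}) ‖y‖³`.
Integrating the second-order term `½ D²f(x)(h(x) y, h(x) y)` over the ε-ball yields exactly
`½ ∑ ∂_{kl} f(x) (h(x) Σ_ε h(x)ᵀ)_{kl}`. All integrals exist because the Lévy condition makes
`‖y‖²` integrable on the unit ball.
-/

theorem norm_taylor_two_remainder_le {E F : Type*} [NormedAddCommGroup E] [NormedSpace ℝ E]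
    [NormedAddCommGroup F] [NormedSpace ℝ F] [CompleteSpace F] {f : E → F}
    (hf : ContDiff ℝ 3 f) (x v : E) {K : ℝ}
    (hK : ∀ t ∈ Set.Icc (0 : ℝ) 1, ‖iteratedFDeriv ℝ 3 f (x + t • v)‖ ≤ K) :
    ‖f (x + v) - f x - fderiv ℝ f x v - (1 / 2 : ℝ) • fderiv ℝ (fderiv ℝ f) x v v‖
      ≤ K / 2 * ‖v‖ ^ 3 := by
  have htaylor := map_add_eq_sum_add_integral_iteratedFDeriv (n := 2) (x := x) (y := v)
    fun t _ => hf.contDiffAt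
  simp only [Finset.sum_range_succ, Finset.sum_range_zero, iteratedFDeriv_zero_apply,
    iteratedFDeriv_one_apply, iteratedFDeriv_two_apply] at htaylor
  have hintegrand : ∀ t ∈ Set.uIoc (0 : ℝ) 1,
      ‖(1 - t) ^ 2 • iteratedFDeriv ℝ (2 + 1) f (x + t • v) (fun _ => v)‖ ≤ K * ‖v‖ ^ 3 := by
    intro t ht
    rw [Set.uIoc_of_le zero_le_one] at ht
    calc ‖(1 - t) ^ 2 • iteratedFDeriv ℝ (2 + 1) f (x + t • v) (fun _ => v)‖
        ≤ 1 * (‖iteratedFDeriv ℝ 3 f (x + t • v)‖ * ∏ _ : Fin 3, ‖v‖) := by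
          rw [norm_smul]
          gcongr
          · rw [norm_pow, Real.norm_eq_abs, abs_of_nonneg (by linarith [ht.2])]
            exact pow_le_one₀ (by linarith [ht.2]) (by linarith [ht.1])
          · exact (iteratedFDeriv ℝ 3 f (x + t • v)).le_opNorm _
      _ ≤ K * ‖v‖ ^ 3 := by
          rw [one_mul, Fin.prod_const]
          gcongr
          exact hK t (Set.Ioc_subset_Icc_self ht)
  have hremainder := intervalIntegral.norm_integral_le_of_norm_le_const hintegrand
  rw [htaylor]
  norm_num [Nat.factorial] at hremainder ⊢
  rw [show ∀ a b c e : F, a + b + c + e - a - b - c = e from fun _ _ _ _ => by abel, norm_smul]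
  norm_num
  linarith

theorem fderiv_fderiv_apply_const {𝕜 E F : Type*} [NontriviallyNormedField 𝕜]
    [NormedAddCommGroup E] [NormedSpace 𝕜 E] [NormedAddCommGroup F] [NormedSpace 𝕜 F]
    {f : E → F} {x : E} (hf : DifferentiableAt 𝕜 (fderiv 𝕜 f) x) (u w : E) :
    fderiv 𝕜 (fun z => fderiv 𝕜 f z w) x u = fderiv 𝕜 (fderiv 𝕜 f) x u w := by
  simp [fderiv_clm_apply hf (differentiableAt_const w)]

theorem ContinuousLinearMap.apply_apply_eq_sum_single {ι 𝕜 F : Type*} [Fintype ι]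
    [DecidableEq ι] [NontriviallyNormedField 𝕜] [NormedAddCommGroup F] [NormedSpace 𝕜 F]
    (A : (ι → 𝕜) →L[𝕜] (ι → 𝕜) →L[𝕜] F) (u w : ι → 𝕜) :
    A u w = ∑ k, ∑ l, (u k * w l) • A (Pi.single k 1) (Pi.single l 1) := by
  conv_lhs => rw [pi_eq_sum_univ' u, pi_eq_sum_univ' w]
  simp only [map_sum, map_smul, _root_.sum_apply, _root_.smul_apply, Finset.smul_sum, smul_smul,
    mul_comm (w _)]
  exact Finset.sum_comm

-- `‖·‖` on `n → ℝ` is the sup norm, whence the factor `card n`.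
theorem norm_mulVec_le_of_abs_le {m n : Type*} [Fintype m] [Fintype n] {H : Matrix m n ℝ}
    {a : ℝ} (ha : 0 ≤ a) (hH : ∀ k l, |H k l| ≤ a) (y : n → ℝ) :
    ‖H *ᵥ y‖ ≤ Fintype.card n * a * ‖y‖ := by
  refine (pi_norm_le_iff_of_nonneg (by positivity)).2 fun k => ?_
  calc ‖(H *ᵥ y) k‖ ≤ ∑ l, |H k l| * ‖y l‖ := by
        simpa [mulVec, dotProduct, abs_mul] using
          Finset.abs_sum_le_sum_abs (fun l => H k l * y l) Finset.univ
    _ ≤ ∑ _l : n, a * ‖y‖ := by gcongr with l; exacts [hH k l, norm_le_pi_norm y l]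
    _ = Fintype.card n * a * ‖y‖ := by simp [mul_assoc]

theorem mul_one_add_pow_mul_pow_le {M a c D : ℝ} (hM : 0 ≤ M) (ha : 0 ≤ a) (hc : 0 ≤ c)
    (hcD : c ≤ D * (1 + a)) (p : ℕ) :
    M * (1 + (a + c) ^ p) / 2 * c ^ 3
      ≤ 2 ^ (p + 2) * (1 + D) ^ (p + 3) * M * (1 + a ^ (p + 3)) := by
  have hD : 0 ≤ D := nonneg_of_mul_nonneg_left (hc.trans hcD) (by positivity)
  set Q := (1 + D) * (1 + a)
  have hQ : 1 ≤ Q := one_le_mul_of_one_le_of_one_le (by linarith) (by linarith)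
  have hcQ : c ≤ Q := by nlinarith
  have hacQ : a + c ≤ Q := by nlinarith
  have hgrowth : 1 + (a + c) ^ p ≤ 2 * Q ^ p := by
    nlinarith [one_le_pow₀ (n := p) hQ, pow_le_pow_left₀ (by positivity) hacQ p]
  calc M * (1 + (a + c) ^ p) / 2 * c ^ 3 ≤ M * (2 * Q ^ p) / 2 * Q ^ 3 := by gcongr
    _ = M * (1 + D) ^ (p + 3) * (1 + a) ^ (p + 3) := by rw [mul_pow]; ring
    _ ≤ M * (1 + D) ^ (p + 3) * (2 ^ (p + 2) * (1 + a ^ (p + 3))) := by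
        gcongr
        simpa using add_pow_le zero_le_one ha (p + 3)
    _ = 2 ^ (p + 2) * (1 + D) ^ (p + 3) * M * (1 + a ^ (p + 3)) := by ring

theorem norm_integral_sub_integral_le {α F : Type*} [MeasurableSpace α] [NormedAddCommGroup F]
    [NormedSpace ℝ F] {μ : Measure α} {Φ G : α → F} {w : α → ℝ}
    (hΦ : AEStronglyMeasurable Φ μ) (hG : Integrable G μ) (hw : Integrable w μ)
    (hle : ∀ᵐ a ∂μ, ‖Φ a - G a‖ ≤ w a) :
    ‖∫ a, Φ a ∂μ - ∫ a, G a ∂μ‖ ≤ ∫ a, w a ∂μ := by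
  have hΦG : Integrable (fun a => Φ a - G a) μ := hw.mono' (hΦ.sub hG.1) hle
  have hΦint : Integrable Φ μ :=
    (hΦG.add hG).congr (ae_of_all _ fun a => sub_add_cancel (Φ a) (G a))
  rw [← integral_sub hΦint hG]
  exact norm_integral_le_of_norm_le hw hle

theorem integrable_norm_sq_restrict_of_lintegral_min_ne_top {E : Type*} [NormedAddCommGroup E]
    [MeasurableSpace E] [OpensMeasurableSpace E] {ν : Measure E}
    (hν : ∫⁻ y, ENNReal.ofReal (min 1 (‖y‖ ^ 2)) ∂ν ≠ ⊤) {ε : ℝ} (hε : ε ≤ 1) :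
    Integrable (fun y => ‖y‖ ^ 2) (ν.restrict {y | ‖y‖ ≤ ε}) := by
  refine ⟨(continuous_norm.pow 2).aestronglyMeasurable, lt_of_le_of_lt ?_ hν.lt_top⟩
  calc ∫⁻ y in {y | ‖y‖ ≤ ε}, ‖‖y‖ ^ 2‖ₑ ∂ν
      = ∫⁻ y in {y | ‖y‖ ≤ ε}, ENNReal.ofReal (min 1 (‖y‖ ^ 2)) ∂ν := by
        refine setLIntegral_congr_fun (measurableSet_le measurable_norm measurable_const)
          fun y hy => ?_
        have hy1 : ‖y‖ ^ 2 ≤ 1 := pow_le_one₀ (norm_nonneg y) (le_trans hy hε)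
        rw [min_eq_right hy1, Real.enorm_of_nonneg (by positivity)]
    _ ≤ ∫⁻ y, ENNReal.ofReal (min 1 (‖y‖ ^ 2)) ∂ν := setLIntegral_le_lintegral _ _

theorem integrable_apply_mul_apply_of_integrable_norm_sq {n : Type*} [Fintype n]
    {μ : Measure (n → ℝ)} (hμ : Integrable (fun y => ‖y‖ ^ 2) μ) (i j : n) :
    Integrable (fun y => y i * y j) μ := by
  refine hμ.mono' (by fun_prop) (ae_of_all _ fun y => ?_)
  rw [norm_mul, sq]
  exact mul_le_mul (norm_le_pi_norm y i) (norm_le_pi_norm y j) (norm_nonneg _) (norm_nonneg _)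

theorem integrable_apply_apply_of_integrable_norm_sq {Y E F : Type*} [NormedAddCommGroup Y]
    [NormedSpace ℝ Y] [MeasurableSpace Y] [OpensMeasurableSpace Y] [NormedAddCommGroup E]
    [NormedSpace ℝ E] [NormedAddCommGroup F] [NormedSpace ℝ F] [SecondCountableTopology F]
    {μ : Measure Y} (hμ : Integrable (fun y => ‖y‖ ^ 2) μ) (A : E →L[ℝ] E →L[ℝ] F)
    (L : Y →L[ℝ] E) :
    Integrable (fun y => A (L y) (L y)) μ := by
  refine (hμ.const_mul (‖A‖ * ‖L‖ ^ 2)).mono'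
    (A.continuous₂.comp₂ L.continuous L.continuous).aestronglyMeasurable
    (ae_of_all _ fun y => ?_)
  calc ‖A (L y) (L y)‖ ≤ ‖A‖ * ‖L y‖ * ‖L y‖ := A.le_opNorm₂ _ _
    _ ≤ ‖A‖ * (‖L‖ * ‖y‖) * (‖L‖ * ‖y‖) := by gcongr <;> exact L.le_opNorm y
    _ = ‖A‖ * ‖L‖ ^ 2 * ‖y‖ ^ 2 := by ring

noncomputable def secondMomentMatrix {n : Type*} (μ : Measure (n → ℝ)) : Matrix n n ℝ :=
  Matrix.of fun i j => ∫ y, y i * y j ∂μ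

theorem Matrix.mulVec_apply_mul_mulVec_apply {m n R : Type*} [Fintype n] [CommSemiring R]
    (H : Matrix m n R) (y : n → R) (k l : m) :
    (H *ᵥ y) k * (H *ᵥ y) l = ∑ i, ∑ j, H k i * H l j * (y i * y j) := by
  simp only [mulVec, dotProduct, Finset.sum_mul_sum]
  exact Finset.sum_congr rfl fun i _ => Finset.sum_congr rfl fun j _ => by ring

section SecondMoments

variable {m n : Type*} [Fintype n] {μ : Measure (n → ℝ)}

theorem integrable_mulVec_mul_mulVec (hμ : ∀ i j, Integrable (fun y => y i * y j) μ)
    (H : Matrix m n ℝ) (k l : m) :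
    Integrable (fun y => (H *ᵥ y) k * (H *ᵥ y) l) μ := by
  simp only [mulVec_apply_mul_mulVec_apply]
  exact integrable_finsetSum _ fun i _ => integrable_finsetSum _ fun j _ => (hμ i j).const_mul _

theorem integral_mulVec_mul_mulVec (hμ : ∀ i j, Integrable (fun y => y i * y j) μ)
    (H : Matrix m n ℝ) (k l : m) :
    ∫ y, (H *ᵥ y) k * (H *ᵥ y) l ∂μ = (H * secondMomentMatrix μ * Hᵀ) k l := by
  simp only [mulVec_apply_mul_mulVec_apply]
  rw [integral_finsetSum _ fun i _ => integrable_finsetSum _ fun j _ => (hμ i j).const_mul _]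
  simp only [integral_finsetSum _ fun j _ => (hμ _ j).const_mul _, integral_const_mul,
    mul_apply, transpose_apply, secondMomentMatrix, of_apply, Finset.sum_mul]
  rw [Finset.sum_comm]
  exact Finset.sum_congr rfl fun i _ => Finset.sum_congr rfl fun j _ => by ring

theorem integral_apply_mulVec_mulVec [Fintype m] [DecidableEq m]
    (hμ : ∀ i j, Integrable (fun y => y i * y j) μ) (A : (m → ℝ) →L[ℝ] (m → ℝ) →L[ℝ] ℝ)
    (H : Matrix m n ℝ) :
    ∫ y, A (H *ᵥ y) (H *ᵥ y) ∂μ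
      = ∑ k, ∑ l, A (Pi.single k 1) (Pi.single l 1) * (H * secondMomentMatrix μ * Hᵀ) k l := by
  simp only [A.apply_apply_eq_sum_single (H *ᵥ _), smul_eq_mul]
  rw [integral_finsetSum _ fun k _ => integrable_finsetSum _ fun l _ =>
    (integrable_mulVec_mul_mulVec hμ H k l).mul_const _]
  simp only [integral_finsetSum _ fun l _ => (integrable_mulVec_mul_mulVec hμ H _ l).mul_const _,
    integral_mul_const, integral_mulVec_mul_mulVec hμ, mul_comm]

end SecondMoments

section SmallJumps

variable {Y E : Type*} [NormedAddCommGroup Y] [NormedSpace ℝ Y] [NormedAddCommGroup E]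
  [NormedSpace ℝ E] {f : E → ℝ} {K : ℝ}

theorem abs_taylor_two_remainder_comp_le (hf : ContDiff ℝ 3 f) (x : E) (L : Y →L[ℝ] E)
    (hK : ∀ z ∈ Metric.closedBall x ‖L‖, ‖iteratedFDeriv ℝ 3 f z‖ ≤ K) {y : Y} (hy : ‖y‖ ≤ 1) :
    |f (x + L y) - f x - fderiv ℝ f x (L y) - 1 / 2 * fderiv ℝ (fderiv ℝ f) x (L y) (L y)|
      ≤ K / 2 * ‖L‖ ^ 3 * ‖y‖ ^ 3 := by
  have hK0 : 0 ≤ K := (norm_nonneg _).trans (hK x (Metric.mem_closedBall_self (norm_nonneg L)))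
  have hLy : ‖L y‖ ≤ ‖L‖ * ‖y‖ := L.le_opNorm y
  have hsegment : ∀ t ∈ Set.Icc (0 : ℝ) 1, x + t • L y ∈ Metric.closedBall x ‖L‖ := by
    intro t ht
    rw [Metric.mem_closedBall, dist_self_add_left, norm_smul, Real.norm_of_nonneg ht.1]
    calc t * ‖L y‖ ≤ 1 * (‖L‖ * 1) := by gcongr; exacts [ht.2, hLy.trans (by gcongr)]
      _ = ‖L‖ := by ring
  calc _ ≤ K / 2 * ‖L y‖ ^ 3 := by
        simpa [smul_eq_mul] using
          norm_taylor_two_remainder_le hf x (L y) fun t ht => hK _ (hsegment t ht)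
    _ ≤ K / 2 * (‖L‖ * ‖y‖) ^ 3 := by gcongr
    _ = K / 2 * ‖L‖ ^ 3 * ‖y‖ ^ 3 := by ring

theorem abs_integral_taylor_two_remainder_le [MeasurableSpace Y] [OpensMeasurableSpace Y]
    {μ : Measure Y} (hμ : Integrable (fun y => ‖y‖ ^ 2) μ) (hμ1 : ∀ᵐ y ∂μ, ‖y‖ ≤ 1)
    (L : Y →L[ℝ] E) (hf : ContDiff ℝ 3 f) (x : E)
    (hK : ∀ z ∈ Metric.closedBall x ‖L‖, ‖iteratedFDeriv ℝ 3 f z‖ ≤ K) :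
    |∫ y, (f (x + L y) - f x - fderiv ℝ f x (L y)) ∂μ
        - (1 / 2) * ∫ y, fderiv ℝ (fderiv ℝ f) x (L y) (L y) ∂μ|
      ≤ K / 2 * ‖L‖ ^ 3 * ∫ y, ‖y‖ ^ 3 ∂μ := by
  have hfc : Continuous f := hf.continuous
  have hcube : Integrable (fun y => ‖y‖ ^ 3) μ := by
    refine hμ.mono' (by fun_prop) (hμ1.mono fun y hy => ?_)
    rw [Real.norm_of_nonneg (by positivity)]
    exact pow_le_pow_of_le_one (norm_nonneg y) hy (by norm_num)
  rw [← integral_const_mul, ← Real.norm_eq_abs, ← integral_const_mul]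
  refine norm_integral_sub_integral_le (by fun_prop)
    ((integrable_apply_apply_of_integrable_norm_sq hμ _ L).const_mul _) (hcube.const_mul _) ?_
  filter_upwards [hμ1] with y hy
  simpa [mul_assoc] using abs_taylor_two_remainder_comp_le hf x L hK hy

end SmallJumps

/-- Third-order Taylor bound behind the Asmussen–Rosiński Gaussian substitution of
small jumps: replacing the small-jump integral by the second-order term
`(1/2)∑_{k,l} ∂_{kl}f(x) (h(x) Σ_ε h(x)*)_{kl}` produces an error bounded by
`C M (1+‖x‖^{p+3}) ∫_{‖y‖≤ε} ‖y‖³ dν`. -/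
theorem asmussen_rosinski_third_order_bound (N d : ℕ) (Ch : ℝ) (hCh : 0 < Ch) (p : ℕ) :
    ∃ C : ℝ, 0 < C ∧
      ∀ (ν : Measure (Fin d → ℝ))
        (_hLevy : ∫⁻ y, ENNReal.ofReal (min 1 (‖y‖ ^ 2)) ∂ν ≠ ⊤)
        (h : (Fin N → ℝ) → Matrix (Fin N) (Fin d) ℝ)
        (Kh : NNReal) (_hLip : ∀ k l, LipschitzWith Kh (fun x => h x k l))
        (_hgrowth : ∀ x k l, |h x k l| ≤ Ch * (1 + ‖x‖))
        (f : (Fin N → ℝ) → ℝ) (_hf : ContDiff ℝ 3 f)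
        (M : ℝ) (_hM : 0 ≤ M)
        (_hD3 : ∀ z, ‖iteratedFDeriv ℝ 3 f z‖ ≤ M * (1 + ‖z‖ ^ p))
        (x : Fin N → ℝ) (ε : ℝ), ε ∈ Set.Ioc (0:ℝ) 1 →
        |(∫ y in {y : Fin d → ℝ | ‖y‖ ≤ ε},
              (f (x + (h x).mulVec y) - f x - fderiv ℝ f x ((h x).mulVec y)) ∂ν)
          - (1 / 2) * ∑ k : Fin N, ∑ l : Fin N,
              (fderiv ℝ (fun z => fderiv ℝ f z (Pi.single l 1)) x (Pi.single k 1))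
                * ((h x * (Matrix.of fun i j : Fin d =>
                      ∫ y in {y : Fin d → ℝ | ‖y‖ ≤ ε}, y i * y j ∂ν) * (h x).transpose) k l)|
          ≤ C * M * (1 + ‖x‖ ^ (p + 3))
              * ∫ y in {y : Fin d → ℝ | ‖y‖ ≤ ε}, ‖y‖ ^ 3 ∂ν := by
  refine ⟨2 ^ (p + 2) * (1 + d * Ch) ^ (p + 3), by positivity, ?_⟩
  intro ν hLevy h Kh hLip hgrowth f hf M hM hD3 x ε hε
  set μ := ν.restrict {y : Fin d → ℝ | ‖y‖ ≤ ε}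
  have hμ : Integrable (fun y => ‖y‖ ^ 2) μ :=
    integrable_norm_sq_restrict_of_lintegral_min_ne_top hLevy hε.2
  have hμ1 : ∀ᵐ y ∂μ, ‖y‖ ≤ 1 :=
    (ae_restrict_mem (measurableSet_le measurable_norm measurable_const)).mono
      fun y hy => le_trans hy hε.2
  set L := LinearMap.toContinuousLinearMap (Matrix.toLin' (h x))
  have hL : ‖L‖ ≤ d * Ch * (1 + ‖x‖) := L.opNorm_le_bound (by positivity) fun y => by
    simpa [L, mul_assoc] using norm_mulVec_le_of_abs_le (by positivity) (hgrowth x) y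
  have hK : ∀ z ∈ Metric.closedBall x ‖L‖,
      ‖iteratedFDeriv ℝ 3 f z‖ ≤ M * (1 + (‖x‖ + ‖L‖) ^ p) := fun z hz => by
    have : ‖z‖ ≤ ‖x‖ + ‖L‖ := by
      simpa using (norm_le_norm_add_norm_sub' z x).trans (by gcongr; rwa [← dist_eq_norm])
    exact (hD3 z).trans (by gcongr)
  have hd2f := (hf.fderiv_right (m := 2) (by norm_num)).differentiable (by norm_num) x
  simp only [fderiv_fderiv_apply_const hd2f]
  rw [← secondMomentMatrix.eq_1, ← integral_apply_mulVec_mulVec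
    (integrable_apply_mul_apply_of_integrable_norm_sq hμ)]
  calc _ ≤ M * (1 + (‖x‖ + ‖L‖) ^ p) / 2 * ‖L‖ ^ 3 * ∫ y, ‖y‖ ^ 3 ∂μ :=
        abs_integral_taylor_two_remainder_le hμ hμ1 L hf x hK
    _ ≤ _ := mul_le_mul_of_nonneg_right
        (mul_one_add_pow_mul_pow_le hM (norm_nonneg x) (norm_nonneg L) hL p)
        (integral_nonneg fun y => by positivity)
end
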